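/- Let d ≥ 2 and n ≥ 1 be integers and let α be an integer with max{d,n} ≤ α ≤ dn. Then the maximum of C_D(X) = Σ_{j=1}^n ‖X_{:j}‖_0² over all matrices X ∈ 𝔹_{≠0}^{d×n} with exactly α nonzero entries is attained and equals U(α,n,d) := (d+1)·(α−n)̄_{d−1} + n − 1 + (α − n + 1 − (α−n)̄_{d−1})², where for nonnegative integers a, b the notation ā_b := b·⌊a/b⌋ denotes a rounded down to the nearest multiple of b. -/
import Mathlib

/-- `X ∈ 𝔹_{≠0}^{d×n}`: entries in `{-1,0,1}`, no zero row, no zero column. -/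
def SignBinaryNZ {d n : ℕ} (X : Matrix (Fin d) (Fin n) ℝ) : Prop :=
  (∀ i j, X i j = -1 ∨ X i j = 0 ∨ X i j = 1) ∧
  (∀ i, ∃ j, X i j ≠ 0) ∧ (∀ j, ∃ i, X i j ≠ 0)

/-- `‖X‖₀`: number of nonzero entries of `X`. -/
noncomputable def nnzMat {d n : ℕ} (X : Matrix (Fin d) (Fin n) ℝ) : ℕ :=
  ∑ i, (Finset.univ.filter fun j => X i j ≠ 0).card

/-- `C_D(X) = Σ_j ‖X_{:j}‖₀²` (for binary matrices). -/
noncomputable def CDbin {d n : ℕ} (X : Matrix (Fin d) (Fin n) ℝ) : ℝ :=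
  ∑ j, ((Finset.univ.filter fun i => X i j ≠ 0).card : ℝ) ^ 2

lemma g_subadd (b x y : ℕ) (hb : 0 < b) (hx : x ≤ b) (hy : y ≤ b) :
    ((x + y) % b) * (b - (x + y) % b) ≤ x * (b - x) + y * (b - y) := by
  by_cases h : x + y < b
  · rw [Nat.mod_eq_of_lt h]
    zify [hx, hy, h.le]
    nlinarith
  · push_neg at h
    by_cases h2 : x + y < 2 * b
    · have h3 : (x + y) % b = x + y - b := by
        rw [Nat.mod_eq_sub_mod h, Nat.mod_eq_of_lt (by omega)]
      rw [h3]
      have h4 : x + y - b ≤ b := by omega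
      zify [hx, hy, h, h4]
      nlinarith [mul_nonneg (by linarith : (0:ℤ) ≤ (b:ℤ) - x) (by linarith : (0:ℤ) ≤ (b:ℤ) - y)]
    · have hx' : x = b := by omega
      have hy' : y = b := by omega
      subst hx' hy'
      simp

lemma g_sum {ι : Type*} (b : ℕ) (hb : 0 < b) (s : Finset ι) (a : ι → ℕ)
    (h : ∀ i ∈ s, a i ≤ b) :
    ((∑ i ∈ s, a i) % b) * (b - (∑ i ∈ s, a i) % b) ≤ ∑ i ∈ s, a i * (b - a i) := by
  induction s using Finset.cons_induction with
  | empty => simp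
  | cons i s hi ih =>
    rw [Finset.sum_cons, Finset.sum_cons]
    have h1 : (a i + ∑ j ∈ s, a j) % b = (a i + (∑ j ∈ s, a j) % b) % b := by
      rw [Nat.add_mod_mod]
    rw [h1]
    calc ((a i + (∑ j ∈ s, a j) % b) % b) * (b - (a i + (∑ j ∈ s, a j) % b) % b)
        ≤ a i * (b - a i) + ((∑ j ∈ s, a j) % b) * (b - (∑ j ∈ s, a j) % b) :=
          g_subadd b _ _ hb (h i (Finset.mem_cons_self i s)) (Nat.mod_lt _ hb).le
      _ ≤ a i * (b - a i) + ∑ j ∈ s, a j * (b - a j) :=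
          Nat.add_le_add_left (ih fun j hj => h j (Finset.mem_cons_of_mem hj)) _

lemma key_bound {ι : Type*} (b : ℕ) (hb : 0 < b) (s : Finset ι) (a : ι → ℕ)
    (h : ∀ i ∈ s, a i ≤ b) :
    (∑ i ∈ s, a i * a i) + ((∑ i ∈ s, a i) % b) * (b - (∑ i ∈ s, a i) % b)
      ≤ b * ∑ i ∈ s, a i := by
  have hg := g_sum b hb s a h
  have he : (∑ i ∈ s, a i * a i) + (∑ i ∈ s, a i * (b - a i)) = b * ∑ i ∈ s, a i := by
    rw [← Finset.sum_add_distrib, Finset.mul_sum]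
    refine Finset.sum_congr rfl fun i hi => ?_
    have h2 : a i * a i + a i * (b - a i) = a i * (a i + (b - a i)) := by ring
    rw [h2, Nat.add_sub_cancel' (h i hi), Nat.mul_comm]
  omega

lemma nnz_eq_sum_col {d n : ℕ} (X : Matrix (Fin d) (Fin n) ℝ) :
    nnzMat X = ∑ j, (Finset.univ.filter fun i => X i j ≠ 0).card := by
  unfold nnzMat
  simp_rw [Finset.card_filter]
  rw [Finset.sum_comm]

lemma card_val_lt (d k : ℕ) (h : k ≤ d) :
    ((Finset.univ : Finset (Fin d)).filter (fun i : Fin d => (i : ℕ) < k)).card = k := by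
  have he : (Finset.univ : Finset (Fin d)).filter (fun i : Fin d => (i : ℕ) < k)
      = Finset.attachFin (Finset.range k)
        (fun m hm => lt_of_lt_of_le (Finset.mem_range.mp hm) h) := by
    ext i; simp [Finset.mem_attachFin]
  rw [he, Finset.card_attachFin, Finset.card_range]

lemma card_val_eq (d t : ℕ) (ht : t < d) :
    ((Finset.univ : Finset (Fin d)).filter (fun i : Fin d => (i : ℕ) = t)).card = 1 := by
  have he : (Finset.univ : Finset (Fin d)).filter (fun i : Fin d => (i : ℕ) = t)
      = {(⟨t, ht⟩ : Fin d)} := by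
    ext i; simp [Fin.ext_iff]
  rw [he, Finset.card_singleton]

/-- the construction matrix -/
noncomputable def consX (d n q r : ℕ) : Matrix (Fin d) (Fin n) ℝ := fun i j =>
  if (j : ℕ) < q then 1
  else if (j : ℕ) = q then (if (i : ℕ) ≤ r then 1 else 0)
  else (if (i : ℕ) = min (r + ((j : ℕ) - q)) (d - 1) then 1 else 0)

lemma consX_col {d n q r : ℕ} (hd : 2 ≤ d) (hr : r < d - 1) (j : Fin n) :
    ((Finset.univ : Finset (Fin d)).filter (fun i => consX d n q r i j ≠ 0)).card
      = if (j : ℕ) < q then d else if (j : ℕ) = q then r + 1 else 1 := by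
  rcases lt_trichotomy (j : ℕ) q with hj | hj | hj
  · rw [if_pos hj]
    have he : (Finset.univ : Finset (Fin d)).filter (fun i => consX d n q r i j ≠ 0)
        = Finset.univ := by
      ext i
      simp only [Finset.mem_filter, Finset.mem_univ, true_and, consX, if_pos hj]
      norm_num
    rw [he, Finset.card_univ, Fintype.card_fin]
  · rw [if_neg (by omega), if_pos hj]
    have he : (Finset.univ : Finset (Fin d)).filter (fun i => consX d n q r i j ≠ 0)
        = (Finset.univ : Finset (Fin d)).filter (fun i : Fin d => (i : ℕ) < r + 1) := by
      ext i
      simp only [Finset.mem_filter, Finset.mem_univ, true_and, consX,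
        if_neg (by omega : ¬ (j : ℕ) < q), if_pos hj, Nat.lt_succ_iff]
      split_ifs with h <;> simp [h]
    rw [he, card_val_lt d (r + 1) (by omega)]
  · rw [if_neg (by omega), if_neg (by omega)]
    have he : (Finset.univ : Finset (Fin d)).filter (fun i => consX d n q r i j ≠ 0)
        = (Finset.univ : Finset (Fin d)).filter
            (fun i : Fin d => (i : ℕ) = min (r + ((j : ℕ) - q)) (d - 1)) := by
      ext i
      simp only [Finset.mem_filter, Finset.mem_univ, true_and, consX,
        if_neg (by omega : ¬ (j : ℕ) < q), if_neg (by omega : ¬ (j : ℕ) = q)]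
      split_ifs with h <;> simp [h]
    rw [he, card_val_eq d _ (by omega)]


lemma consX_ne {d n q r : ℕ} (i : Fin d) (j : Fin n) :
    consX d n q r i j ≠ 0 ↔
      ((j : ℕ) < q ∨ ((j : ℕ) = q ∧ (i : ℕ) ≤ r) ∨
        (q < (j : ℕ) ∧ (i : ℕ) = min (r + ((j : ℕ) - q)) (d - 1))) := by
  unfold consX
  split_ifs with h1 h2 h3 h4 <;> simp_all <;> omega

/-- **Lemma 5.10 (iii): maximum of `C_D` over `𝔹_{≠0}^{d×n}` with `α` nonzeros.**
The maximum is attained and equals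
`U(α,n,d) = (d+1)·(α−n)̄_{d−1} + n − 1 + (α − n + 1 − (α−n)̄_{d−1})²`,
where `ā_b = b⌊a/b⌋`. -/
theorem stmt_7 (d n α : ℕ) (hd : 2 ≤ d) (hn : 1 ≤ n)
    (hα₁ : max d n ≤ α) (hα₂ : α ≤ d * n)
    (U : ℝ)
    (hU : U = ((d : ℝ) + 1) * (((d - 1) * ((α - n) / (d - 1)) : ℕ) : ℝ) + (n : ℝ) - 1 +
      ((α : ℝ) - (n : ℝ) + 1 - (((d - 1) * ((α - n) / (d - 1)) : ℕ) : ℝ)) ^ 2) :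
    (∃ X : Matrix (Fin d) (Fin n) ℝ, SignBinaryNZ X ∧ nnzMat X = α ∧ CDbin X = U) ∧
    (∀ X : Matrix (Fin d) (Fin n) ℝ, SignBinaryNZ X → nnzMat X = α → CDbin X ≤ U) := by
  have hdα : d ≤ α := le_trans (le_max_left d n) hα₁
  have hnα : n ≤ α := le_trans (le_max_right d n) hα₁
  have hbq0 : (d - 1) * ((α - n) / (d - 1)) + (α - n) % (d - 1) = α - n :=
    Nat.div_add_mod (α - n) (d - 1)
  have hr0 : (α - n) % (d - 1) < d - 1 := Nat.mod_lt _ (by omega)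
  -- abstract everything
  generalize hAdef : α - n = A at hU hbq0 hr0
  generalize hbdef : d - 1 = b at hU hbq0 hr0
  generalize hqdef : A / b = q at hU hbq0
  generalize hrdef : A % b = r at hbq0 hr0
  have hb : 0 < b := by omega
  have hqn : q ≤ n := by
    have h1 : A ≤ n * b := by
      have h2 : α ≤ n * b + n := by
        calc α ≤ d * n := hα₂
          _ = n * b + n := by rw [show d = b + 1 by omega]; ring
      omega
    calc q = A / b := hqdef.symm
      _ ≤ (n * b) / b := Nat.div_le_div_right h1
      _ = n := Nat.mul_div_cancel n hb
  -- real-number facts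
  have hdR : (d : ℝ) = (b : ℝ) + 1 := by
    rw [show d = b + 1 by omega]; push_cast; ring
  have hAR : (A : ℝ) = (α : ℝ) - n := by
    rw [← hAdef]; push_cast [hnα]; ring
  have hAR2 : (A : ℝ) = (b : ℝ) * q + r := by
    rw [← hbq0]; push_cast; ring
  have hmcast : ((b * q : ℕ) : ℝ) = (A : ℝ) - r := by
    rw [show b * q = A - r from by omega]
    push_cast [show r ≤ A by omega]
    ring
  have hU' : U = (b : ℝ) * A + 2 * A + n - (b : ℝ) * r + (r : ℝ) * r := by
    rw [hU, hmcast, show ((α : ℝ) - n) = (A : ℝ) from hAR.symm, hdR]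
    ring
  constructor
  · -- existence
    refine ⟨consX d n q r, ?_, ?_, ?_⟩
    · refine ⟨?_, ?_, ?_⟩
      · intro i j
        unfold consX
        split_ifs <;> norm_num
      · -- rows
        intro i
        have hiD : (i : ℕ) < d := i.isLt
        by_cases hq : 1 ≤ q
        · refine ⟨⟨0, by omega⟩, ?_⟩
          rw [consX_ne]
          simp only [Fin.val_mk]
          omega
        · have hq0 : q = 0 := by omega
          have hrA : r = A := by rw [hq0] at hbq0; omega
          by_cases hi : (i : ℕ) ≤ r
          · refine ⟨⟨0, by omega⟩, ?_⟩
            rw [consX_ne]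
            simp only [Fin.val_mk]
            omega
          · push_neg at hi
            have hin : (i : ℕ) - r < n := by omega
            refine ⟨⟨(i : ℕ) - r, hin⟩, ?_⟩
            rw [consX_ne]
            simp only [Fin.val_mk]
            omega
      · -- columns
        intro j
        rcases lt_trichotomy (j : ℕ) q with hj | hj | hj
        · refine ⟨⟨0, by omega⟩, ?_⟩
          rw [consX_ne]
          omega
        · refine ⟨⟨0, by omega⟩, ?_⟩
          rw [consX_ne]
          simp only [Fin.val_mk]
          omega
        · refine ⟨⟨min (r + ((j : ℕ) - q)) (d - 1), by omega⟩, ?_⟩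
          rw [consX_ne]
          exact Or.inr (Or.inr ⟨hj, rfl⟩)
    · -- nnz
      rw [nnz_eq_sum_col]
      rw [Finset.sum_congr rfl (fun j _ => consX_col hd (by omega) j)]
      rw [Fin.sum_univ_eq_sum_range (fun j => if j < q then d else if j = q then r + 1 else 1) n]
      rw [Finset.range_eq_Ico, ← Finset.sum_Ico_consecutive _ (Nat.zero_le q) hqn]
      have hfirst : ∑ j ∈ Finset.Ico 0 q, (if j < q then d else if j = q then r + 1 else 1)
          = q * d := by
        rw [Finset.sum_congr rfl (fun j hj => if_pos (by simp at hj; omega))]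
        simp [mul_comm]
      rw [hfirst]
      by_cases hqn' : q < n
      · rw [Finset.sum_eq_sum_Ico_succ_bot hqn']
        rw [if_neg (lt_irrefl q), if_pos rfl]
        have hlast : ∑ j ∈ Finset.Ico (q + 1) n,
            (if j < q then d else if j = q then r + 1 else 1) = n - (q + 1) := by
          rw [Finset.sum_congr rfl (fun j hj => by
            simp only [Finset.mem_Ico] at hj
            rw [if_neg (by omega), if_neg (by omega)])]
          simp
        rw [hlast, show q * d = b * q + q from by rw [show d = b + 1 by omega]; ring]
        omega
      · have hqn2 : q = n := by omega
        rw [hqn2, Finset.Ico_self, Finset.sum_empty, add_zero]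
        rw [hqn2] at hbq0
        have h8 : d * n = b * n + n := by rw [show d = b + 1 by omega]; ring
        rw [show n * d = b * n + n from by rw [show d = b + 1 by omega]; ring]
        omega
    · -- CDbin value
      unfold CDbin
      rw [Finset.sum_congr rfl (fun j _ => by rw [consX_col hd (by omega) j])]
      rw [Fin.sum_univ_eq_sum_range
        (fun m : ℕ => (((if m < q then d else if m = q then r + 1 else 1) : ℕ) : ℝ) ^ 2) n]
      rw [Finset.range_eq_Ico, ← Finset.sum_Ico_consecutive _ (Nat.zero_le q) hqn]
      have hfirst : ∑ j ∈ Finset.Ico 0 q,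
          (((if j < q then d else if j = q then r + 1 else 1) : ℕ) : ℝ) ^ 2
          = (q : ℝ) * (d : ℝ) ^ 2 := by
        rw [Finset.sum_congr rfl (fun j hj => by rw [if_pos (by simp at hj; omega)])]
        simp [mul_comm]
      rw [hfirst]
      by_cases hqn' : q < n
      · rw [Finset.sum_eq_sum_Ico_succ_bot hqn']
        rw [if_neg (lt_irrefl q), if_pos rfl]
        have hlast : ∑ j ∈ Finset.Ico (q + 1) n,
            (((if j < q then d else if j = q then r + 1 else 1) : ℕ) : ℝ) ^ 2
            = ((n : ℝ) - q - 1) := by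
          rw [Finset.sum_congr rfl (fun j hj => by
            simp only [Finset.mem_Ico] at hj
            rw [if_neg (by omega), if_neg (by omega)])]
          simp only [Finset.sum_const, Nat.card_Ico, Nat.cast_one, one_pow, nsmul_eq_mul, mul_one]
          rw [Nat.cast_sub (by omega)]
          push_cast
          ring
        rw [hlast, hU', hAR2, hdR]
        push_cast
        ring
      · have hqn2 : q = n := by omega
        rw [hqn2] at hbq0
        have hr0' : r = 0 := by
          have h8 : d * n = b * n + n := by rw [show d = b + 1 by omega]; ring
          omega
        rw [hqn2, Finset.Ico_self, Finset.sum_empty, add_zero]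
        rw [hU', hAR2, hdR, hqn2, hr0']
        push_cast
        ring
  · -- upper bound
    intro X hX hnnz
    set c : Fin n → ℕ := fun j => ((Finset.univ : Finset (Fin d)).filter fun i => X i j ≠ 0).card
      with hcdef
    have hcsum : ∑ j, c j = α := by rw [← hnnz, nnz_eq_sum_col]
    have hc1 : ∀ j, 1 ≤ c j := by
      intro j
      obtain ⟨i, hi⟩ := hX.2.2 j
      exact Finset.card_pos.mpr ⟨i, Finset.mem_filter.mpr ⟨Finset.mem_univ i, hi⟩⟩
    have hcd : ∀ j, c j ≤ d := by
      intro j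
      calc c j ≤ (Finset.univ : Finset (Fin d)).card := Finset.card_filter_le _ _
        _ = d := by rw [Finset.card_univ, Fintype.card_fin]
    have hkey := key_bound b hb Finset.univ (fun j => c j - 1) (fun j _ => by
      have h9 := hcd j; show c j - 1 ≤ b; omega)
    have hasum : ∑ j, (c j - 1) = A := by
      have h1 : ∑ j, c j = (∑ j, (c j - 1)) + n := by
        rw [Finset.sum_congr rfl (fun j _ => show c j = (c j - 1) + 1 from by have := hc1 j; omega),
          Finset.sum_add_distrib]
        simp
      omega
    rw [hasum, hrdef] at hkey
    -- hkey : ∑ (c-1)*(c-1) + r * (b - r) ≤ b * A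
    have hN : (∑ j, c j * c j) + r * (b - r) ≤ b * A + 2 * A + n := by
      have h1 : ∑ j, c j * c j = (∑ j, (c j - 1) * (c j - 1)) + 2 * A + n := by
        have h2 : ∀ j : Fin n, c j * c j = (c j - 1) * (c j - 1) + 2 * (c j - 1) + 1 := fun j => by
          have := hc1 j; cases' Nat.exists_eq_add_of_le this with m hm
          rw [hm, Nat.add_sub_cancel_left]; ring
        rw [Finset.sum_congr rfl (fun j _ => h2 j)]
        rw [Finset.sum_add_distrib, Finset.sum_add_distrib, ← Finset.mul_sum, hasum]
        simp
      omega
    have hCD : CDbin X = ((∑ j, c j * c j : ℕ) : ℝ) := by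
      show (∑ j, ((c j : ℝ)) ^ 2) = _
      push_cast
      exact Finset.sum_congr rfl (fun j _ => by ring)
    rw [hCD, hU']
    have h := (Nat.cast_le (α := ℝ)).mpr hN
    push_cast [hr0.le] at h
    push_cast
    nlinarith [h]
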